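/- Let ã < b̃ be real numbers and let u : ℝ → ℝ be twice continuously differentiable on the closed interval [ã, b̃]. Then |u'(ã)| ≤ (4/(b̃ − ã)) · max_{[ã,b̃]} |u| + ((b̃ − ã)/4) · max_{[ã,b̃]} |u''|. -/

import Mathlib

/-! Expanding `u` to second order from `a` to the midpoint `c = (a + b) / 2`, with `h = (b - a) / 2`,
gives `h * u' a = u c - u a - u'' ξ * h ^ 2 / 2` for some `ξ`, hence
`h * |u' a| ≤ 2 * max |u| + h ^ 2 / 2 * max |u''|`; dividing by `h` is the estimate. -/

open Set

theorem abs_le_biSup_abs_of_continuousOn {α : Type*} [TopologicalSpace α] {f : α → ℝ}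
    {s : Set α} (hs : IsCompact s) (hf : ContinuousOn f s) {y : α} (hy : y ∈ s) :
    |f y| ≤ ⨆ x ∈ s, |f x| := by
  refine le_ciSup₂ (f := fun x (_ : x ∈ s) => |f x|) ?_ y hy
  obtain ⟨C, hC⟩ := hs.exists_bound_of_continuousOn hf
  refine ⟨C, ?_⟩
  simp only [mem_upperBounds, mem_iUnion, mem_range]
  rintro _ ⟨x, hx, rfl⟩
  exact hC x hx

/-- Taylor's formula of order two with Lagrange remainder, via Cauchy's mean value theorem for
`t ↦ u c - u t - u' t * (c - t)` and `t ↦ (c - t) ^ 2`. -/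
theorem exists_eq_add_mul_add_mul_sq_of_hasDerivWithinAt {u u' u'' : ℝ → ℝ} {a c : ℝ}
    (hac : a < c) (hu' : ∀ x ∈ Icc a c, HasDerivWithinAt u (u' x) (Icc a c) x)
    (hu'' : ∀ x ∈ Icc a c, HasDerivWithinAt u' (u'' x) (Icc a c) x) :
    ∃ ξ ∈ Ioo a c, u c = u a + u' a * (c - a) + u'' ξ * (c - a) ^ 2 / 2 := by
  have hu_cont : ContinuousOn u (Icc a c) := fun x hx => (hu' x hx).continuousWithinAt
  have hu'_cont : ContinuousOn u' (Icc a c) := fun x hx => (hu'' x hx).continuousWithinAt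
  have interior_deriv {f f' : ℝ → ℝ} (hf : ∀ x ∈ Icc a c, HasDerivWithinAt f (f' x) (Icc a c) x)
      {x : ℝ} (hx : x ∈ Ioo a c) : HasDerivAt f (f' x) x :=
    (hf x (Ioo_subset_Icc_self hx)).hasDerivAt (Icc_mem_nhds hx.1 hx.2)
  obtain ⟨ξ, hξ, hmv⟩ := exists_ratio_hasDerivAt_eq_ratio_slope
    (fun t => u c - u t - u' t * (c - t)) (fun t => -(u'' t * (c - t))) hac
    (by fun_prop) (fun x hx => by
      refine (((interior_deriv hu' hx).const_sub (u c)).sub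
        ((interior_deriv hu'' hx).mul ((hasDerivAt_id x).const_sub c))).congr_deriv ?_
      simp only [id]; ring)
    (fun t => (c - t) ^ 2) (fun t => -(2 * (c - t))) (by fun_prop) (fun x _ => by
      refine (((hasDerivAt_id x).const_sub c).pow 2).congr_deriv ?_
      simp only [id, Nat.cast_ofNat]; ring)
  refine ⟨ξ, hξ, ?_⟩
  have hcξ : c - ξ ≠ 0 := (sub_pos.2 hξ.2).ne'
  apply mul_left_cancel₀ hcξ
  linear_combination (-1 / 2 : ℝ) * hmv

theorem abs_deriv_left_le_of_abs_le {u u' u'' : ℝ → ℝ} {a c M K : ℝ} (hac : a < c)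
    (hu' : ∀ x ∈ Icc a c, HasDerivWithinAt u (u' x) (Icc a c) x)
    (hu'' : ∀ x ∈ Icc a c, HasDerivWithinAt u' (u'' x) (Icc a c) x)
    (hua : |u a| ≤ M) (huc : |u c| ≤ M) (hu''K : ∀ x ∈ Ioo a c, |u'' x| ≤ K) :
    |u' a| ≤ 2 / (c - a) * M + (c - a) / 2 * K := by
  obtain ⟨ξ, hξ, htaylor⟩ := exists_eq_add_mul_add_mul_sq_of_hasDerivWithinAt hac hu' hu''
  have hh : 0 < c - a := sub_pos.2 hac
  have hremainder : |u'' ξ * (c - a) ^ 2 / 2| ≤ K * (c - a) ^ 2 / 2 := by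
    rw [abs_div, abs_mul, abs_of_pos (by positivity : (0 : ℝ) < (c - a) ^ 2), abs_two]
    gcongr
    exact hu''K ξ hξ
  have hmul : |u' a| * (c - a) ≤ 2 * M + K * (c - a) ^ 2 / 2 :=
    calc |u' a| * (c - a) = |u' a * (c - a)| := by rw [abs_mul, abs_of_pos hh]
      _ = |u c - u a - u'' ξ * (c - a) ^ 2 / 2| := by congr 1; linarith
      _ ≤ |u c - u a| + |u'' ξ * (c - a) ^ 2 / 2| := abs_sub _ _
      _ ≤ |u c| + |u a| + |u'' ξ * (c - a) ^ 2 / 2| := by gcongr; exact abs_sub _ _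
      _ ≤ 2 * M + K * (c - a) ^ 2 / 2 := by linarith
  rw [← le_div_iff₀ hh] at hmul
  refine hmul.trans_eq ?_
  field_simp

/-- **Endpoint derivative estimate.**
If `u` is twice continuously differentiable on `[ã, b̃]` (witnessed by functions
`u'`, `u''` which are derivatives of `u` resp. `u'` on the interval, with `u''`
continuous there), then
`|u'(ã)| ≤ (4/(b̃−ã))·max_{[ã,b̃]} |u| + ((b̃−ã)/4)·max_{[ã,b̃]} |u''|`. -/
theorem endpoint_derivative_estimate (a b : ℝ) (hab : a < b) (u u' u'' : ℝ → ℝ)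
    (hu' : ∀ x ∈ Set.Icc a b, HasDerivWithinAt u (u' x) (Set.Icc a b) x)
    (hu'' : ∀ x ∈ Set.Icc a b, HasDerivWithinAt u' (u'' x) (Set.Icc a b) x)
    (hcont : ContinuousOn u'' (Set.Icc a b)) :
    |u' a| ≤ 4 / (b - a) * (⨆ x ∈ Set.Icc a b, |u x|)
      + (b - a) / 4 * ⨆ x ∈ Set.Icc a b, |u'' x| := by
  have hac : a < (a + b) / 2 := by linarith
  have hsub : Icc a ((a + b) / 2) ⊆ Icc a b := Icc_subset_Icc_right (by linarith)
  have hu_cont : ContinuousOn u (Icc a b) := fun x hx => (hu' x hx).continuousWithinAt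
  have hbound := abs_deriv_left_le_of_abs_le hac
    (fun x hx => (hu' x (hsub hx)).mono hsub) (fun x hx => (hu'' x (hsub hx)).mono hsub)
    (abs_le_biSup_abs_of_continuousOn isCompact_Icc hu_cont (left_mem_Icc.2 hab.le))
    (abs_le_biSup_abs_of_continuousOn isCompact_Icc hu_cont (hsub (right_mem_Icc.2 hac.le)))
    (fun x hx => abs_le_biSup_abs_of_continuousOn isCompact_Icc hcont
      (hsub (Ioo_subset_Icc_self hx)))
  refine hbound.trans_eq ?_
  rw [show (a + b) / 2 - a = (b - a) / 2 by ring, div_div_eq_mul_div]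
  ring
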